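/- arXiv:1809.07481 — 4 statements merged into one kernel-verified Lean document; each statement's English description precedes it below -/
import Mathlib

section
/- For every function f : R -> R^2 and every set s of real numbers, the total variation of f on s measured in the L1 metric on the plane equals the sum of the total variations of its two coordinate functions on s: eVariationOn f s (with f valued in WithLp 1 (R x R)) = eVariationOn (fun t => (f t).1) s + eVariationOn (fun t => (f t).2) s. -/
open Set

/-!
On a finite set the variation is the sum of the distances between consecutive points (add the
points one at a time, largest last), and in the `L¹` metric each such distance is the sum of the
coordinate distances; so the identity holds on finite sets. It passes to arbitrary sets because the
variation is approximated by finite subsets and any two partitions, one for each coordinate, lie in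
a common finite subset.
-/

section

variable {α : Type*} [LinearOrder α] {E F G : Type*}
  [PseudoEMetricSpace E] [PseudoEMetricSpace F] [PseudoEMetricSpace G]

theorem WithLp.prod_edist_one_eq_add (x y : WithLp 1 (E × F)) :
    edist x y = edist x.ofLp.1 y.ofLp.1 + edist x.ofLp.2 y.ofLp.2 := by
  rw [WithLp.prod_edist_eq_add (by norm_num) x y]
  norm_num

theorem eVariationOn.insert_of_isGreatest (f : α → E) {s : Set α} {a b : α}
    (hb : IsGreatest s b) (hba : b ≤ a) :
    eVariationOn f (insert a s) = eVariationOn f s + edist (f b) (f a) := by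
  rw [← union_singleton, eVariationOn.union' f hb isLeast_singleton hba,
    eVariationOn.subsingleton f subsingleton_singleton, add_zero]

theorem eVariationOn.withLp_one_prod_of_finset (f : α → WithLp 1 (E × F)) (t : Finset α) :
    eVariationOn f t =
      eVariationOn (fun x => (f x).ofLp.1) t + eVariationOn (fun x => (f x).ofLp.2) t := by
  induction t using Finset.induction_on_max with
  | empty => simp [eVariationOn.subsingleton]
  | insert a t hlt ih =>
    rcases t.eq_empty_or_nonempty with rfl | ht
    · simp [eVariationOn.subsingleton]
    have hb : IsGreatest (t : Set α) (t.max' ht) := t.isGreatest_max' ht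
    have hba : t.max' ht ≤ a := (hlt _ (t.max'_mem ht)).le
    simp only [Finset.coe_insert, insert_of_isGreatest _ hb hba, ih,
      WithLp.prod_edist_one_eq_add]
    exact add_add_add_comm _ _ _ _

theorem eVariationOn.sum_le_image_range (f : α → E) {u : ℕ → α} (hu : Monotone u)
    (n : ℕ) :
    ∑ i ∈ Finset.range n, edist (f (u (i + 1))) (f (u i)) ≤
      eVariationOn f ↑((Finset.range (n + 1)).image u) :=
  sum_le_of_monotoneOn_Iic (hu.monotoneOn _) fun _ hi =>
    Finset.mem_image_of_mem u (Finset.mem_range.2 (Nat.lt_succ_of_le hi))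

theorem eVariationOn.eq_add_of_forall_finset {f : α → E} {g : α → F} {h : α → G}
    (hfgh : ∀ t : Finset α, eVariationOn f t = eVariationOn g t + eVariationOn h t)
    (s : Set α) : eVariationOn f s = eVariationOn g s + eVariationOn h s := by
  apply le_antisymm
  · refine iSup_le fun ⟨n, u, hu, us⟩ => ?_
    set tu := (Finset.range (n + 1)).image u
    have hts : ↑tu ⊆ s := by
      rw [Finset.coe_image]
      exact image_subset_iff.2 fun i _ => us i
    calc _ ≤ eVariationOn f tu := sum_le_image_range f hu n
      _ = eVariationOn g tu + eVariationOn h tu := hfgh tu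
      _ ≤ _ := add_le_add (mono g hts) (mono h hts)
  · rcases s.eq_empty_or_nonempty with rfl | hs
    · simp [eVariationOn.subsingleton]
    have := nonempty_monotone_mem hs
    refine ENNReal.iSup_add_iSup_le fun ⟨n, u, hu, us⟩ ⟨m, v, hv, vs⟩ => ?_
    set tu := (Finset.range (n + 1)).image u
    set tv := (Finset.range (m + 1)).image v
    set t := tu ∪ tv
    have hts : ↑t ⊆ s := by
      rw [Finset.coe_union, Finset.coe_image, Finset.coe_image]
      exact union_subset (image_subset_iff.2 fun i _ => us i) (image_subset_iff.2 fun i _ => vs i)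
    have hut : (tu : Set α) ⊆ t := Finset.coe_subset.2 Finset.subset_union_left
    have hvt : (tv : Set α) ⊆ t := Finset.coe_subset.2 Finset.subset_union_right
    calc _ ≤ eVariationOn g t + eVariationOn h t :=
          add_le_add ((sum_le_image_range g hu n).trans (mono g hut))
            ((sum_le_image_range h hv m).trans (mono h hvt))
      _ = eVariationOn f t := (hfgh t).symm
      _ ≤ _ := mono f hts

end

theorem eVariationOn_L1_eq_add_coords (f : ℝ → WithLp 1 (ℝ × ℝ)) (s : Set ℝ) :
    eVariationOn f s =
      eVariationOn (fun t => (f t).ofLp.1) s + eVariationOn (fun t => (f t).ofLp.2) s :=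
  eVariationOn.eq_add_of_forall_finset (eVariationOn.withLp_one_prod_of_finset f) s
end

section
/- Let g : R -> R^2 be a function such that its first coordinate function t |-> (g t).1 is monotone on the interval [0,1] (either nondecreasing or nonincreasing on [0,1]) and, independently, its second coordinate function t |-> (g t).2 is monotone on [0,1]. Then the total variation of g on [0,1] in the L1 metric equals the L1 distance between its endpoint values: eVariationOn g (Icc 0 1) = ||g 1 - g 0||_1. -/
/-!
In the L1 metric the distance between two points is the sum of the distances of their
coordinates, so the variation of a plane path is at most the sum of the variations of its two
coordinate functions. A monotone real function varies on an interval exactly by its increment,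
which bounds the variation of the path by the L1 distance of its endpoints; the reverse
inequality holds for every path.
-/

open Set

section

variable {α : Type*} [LinearOrder α]

theorem Isometry.eVariationOn_comp {E F : Type*} [PseudoEMetricSpace E] [PseudoEMetricSpace F]
    {φ : E → F} (hφ : Isometry φ) (f : α → E) (s : Set α) :
    eVariationOn (φ ∘ f) s = eVariationOn f s := by
  simp only [eVariationOn, Function.comp_apply, hφ.edist_eq]

theorem eVariationOn_le_add_of_edist_le {E F G : Type*} [PseudoEMetricSpace E]
    [PseudoEMetricSpace F] [PseudoEMetricSpace G] {f : α → E} {g : α → F} {h : α → G}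
    (hfgh : ∀ x y, edist (f x) (f y) ≤ edist (g x) (g y) + edist (h x) (h y)) (s : Set α) :
    eVariationOn f s ≤ eVariationOn g s + eVariationOn h s := by
  refine iSup_le fun ⟨n, u, hu, us⟩ => ?_
  calc ∑ i ∈ Finset.range n, edist (f (u (i + 1))) (f (u i))
      ≤ ∑ i ∈ Finset.range n,
          (edist (g (u (i + 1))) (g (u i)) + edist (h (u (i + 1))) (h (u i))) :=
        Finset.sum_le_sum fun i _ => hfgh _ _
    _ = _ := Finset.sum_add_distrib
    _ ≤ eVariationOn g s + eVariationOn h s :=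
        add_le_add (eVariationOn.sum_le hu us) (eVariationOn.sum_le hu us)

theorem WithLp.eVariationOn_le_fst_add_snd {E F : Type*} [SeminormedAddCommGroup E]
    [SeminormedAddCommGroup F] (f : α → WithLp 1 (E × F)) (s : Set α) :
    eVariationOn f s ≤ eVariationOn (fun t => (f t).fst) s + eVariationOn (fun t => (f t).snd) s :=
  eVariationOn_le_add_of_edist_le (fun _ _ => (WithLp.prod_edist_eq_of_L1 _ _).le) s

theorem AntitoneOn.eVariationOn_eq {f : α → ℝ} {s : Set α} {a b : α} (hf : AntitoneOn f s)
    (as : a ∈ s) (bs : b ∈ s) : eVariationOn f (s ∩ Icc a b) = .ofReal (f a - f b) := by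
  rw [← isometry_neg.eVariationOn_comp f]
  exact (hf.neg.eVariationOn_eq as bs).trans (by rw [neg_sub_neg])

theorem eVariationOn_Icc_eq_edist {f : α → ℝ} {a b : α}
    (hf : MonotoneOn f (Icc a b) ∨ AntitoneOn f (Icc a b)) (hab : a ≤ b) :
    eVariationOn f (Icc a b) = edist (f a) (f b) := by
  have ha : a ∈ Icc a b := left_mem_Icc.2 hab
  have hb : b ∈ Icc a b := right_mem_Icc.2 hab
  rw [← inter_self (Icc a b), edist_comm, edist_dist, Real.dist_eq]
  rcases hf with hf | hf
  · rw [hf.eVariationOn_eq ha hb, abs_of_nonneg (sub_nonneg.2 (hf ha hb hab))]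
  · rw [hf.eVariationOn_eq ha hb, abs_sub_comm, abs_of_nonneg (sub_nonneg.2 (hf ha hb hab))]

end

theorem eVariationOn_eq_L1_dist_of_monotone (g : ℝ → WithLp 1 (ℝ × ℝ))
    (hx : MonotoneOn (fun t => (g t).ofLp.1) (Icc 0 1) ∨ AntitoneOn (fun t => (g t).ofLp.1) (Icc 0 1))
    (hy : MonotoneOn (fun t => (g t).ofLp.2) (Icc 0 1) ∨ AntitoneOn (fun t => (g t).ofLp.2) (Icc 0 1)) :
    eVariationOn g (Icc 0 1) = (‖g 1 - g 0‖₊ : ENNReal) := by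
  rw [← enorm_eq_nnnorm, ← edist_eq_enorm_sub, edist_comm]
  refine le_antisymm ?_ (eVariationOn.edist_le g (left_mem_Icc.2 zero_le_one)
    (right_mem_Icc.2 zero_le_one))
  calc eVariationOn g (Icc 0 1)
      ≤ eVariationOn (fun t => (g t).ofLp.1) (Icc 0 1)
          + eVariationOn (fun t => (g t).ofLp.2) (Icc 0 1) :=
        WithLp.eVariationOn_le_fst_add_snd g _
    _ = edist (g 0).ofLp.1 (g 1).ofLp.1 + edist (g 0).ofLp.2 (g 1).ofLp.2 := by
        rw [eVariationOn_Icc_eq_edist hx zero_le_one, eVariationOn_Icc_eq_edist hy zero_le_one]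
    _ = edist (g 0) (g 1) := (WithLp.prod_edist_eq_of_L1 _ _).symm
end

section
/- Let S be a subset of R^2, let B be a subset of S, and let s, t be points of S. Assume that every path in S from s to t meets B, i.e., for every such path g there exists c in [0,1] with g c in B. Then d_S(s,t) = infimum over x in B of (d_S(s,x) + d_S(x,t)). -/
open Set

noncomputable section

/-- A path in `S` from `p` to `q`: continuous on `[0,1]`, with the prescribed endpoints,
and staying in `S` on `[0,1]`. The plane carries the `L1` metric via `WithLp 1 (ℝ × ℝ)`. -/
def IsPathIn (S : Set (WithLp 1 (ℝ × ℝ))) (p q : WithLp 1 (ℝ × ℝ))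
    (g : ℝ → WithLp 1 (ℝ × ℝ)) : Prop :=
  ContinuousOn g (Icc 0 1) ∧ g 0 = p ∧ g 1 = q ∧ ∀ x ∈ Icc (0:ℝ) 1, g x ∈ S

/-- The intrinsic `L1` distance in `S`: the infimum of the `L1` lengths (total variations)
of all paths in `S` from `p` to `q` (infinity if there is no such path). -/
def dS (S : Set (WithLp 1 (ℝ × ℝ))) (p q : WithLp 1 (ℝ × ℝ)) : ENNReal :=
  ⨅ (g : ℝ → WithLp 1 (ℝ × ℝ)) (_ : IsPathIn S p q g), eVariationOn g (Icc 0 1)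

/-! Splitting a path from `s` to `t` at a point `g c ∈ B` bounds `d_S(s, g c) + d_S(g c, t)` by
the lengths of the two pieces, which add up to the length of `g`. The reverse inequality is the
triangle inequality for `d_S`, obtained by concatenating paths. -/

section Concat

variable {α : Type*}

lemma image_two_mul_Icc_zero_half : (2 * ·) '' Icc (0:ℝ) (1/2) = Icc 0 1 := by
  rw [image_mul_left_Icc' two_pos]
  norm_num

lemma image_two_mul_sub_one_Icc_half_one : (2 * · + -1) '' Icc (1/2:ℝ) 1 = Icc 0 1 := by
  rw [image_affine_Icc' two_pos]
  norm_num

def concatPath (g₁ g₂ : ℝ → α) (y : ℝ) : α :=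
  if y ≤ 1/2 then g₁ (2 * y) else g₂ (2 * y - 1)

lemma concatPath_eqOn_left (g₁ g₂ : ℝ → α) :
    EqOn (concatPath g₁ g₂) (g₁ ∘ (2 * ·)) (Icc 0 (1/2)) :=
  fun _ hy => if_pos hy.2

lemma concatPath_eqOn_right {g₁ g₂ : ℝ → α} (h : g₁ 1 = g₂ 0) :
    EqOn (concatPath g₁ g₂) (g₂ ∘ (2 * · + -1)) (Icc (1/2) 1) := by
  intro y hy
  rcases hy.1.eq_or_lt with rfl | hlt
  · norm_num [concatPath, h]
  · rw [concatPath, if_neg (not_le.2 hlt)]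
    simp [sub_eq_add_neg]

lemma ContinuousOn.concatPath [TopologicalSpace α] {g₁ g₂ : ℝ → α}
    (h₁ : ContinuousOn g₁ (Icc 0 1)) (h₂ : ContinuousOn g₂ (Icc 0 1))
    (h : g₁ 1 = g₂ 0) :
    ContinuousOn (concatPath g₁ g₂) (Icc 0 1) := by
  rw [← Icc_union_Icc_eq_Icc (by norm_num : (0:ℝ) ≤ 1/2) (by norm_num)]
  refine ContinuousOn.union_of_isClosed ?_ ?_ isClosed_Icc isClosed_Icc
  · refine (h₁.comp (by fun_prop) ?_).congr (concatPath_eqOn_left g₁ g₂)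
    exact image_two_mul_Icc_zero_half ▸ mapsTo_image _ _
  · refine (h₂.comp (by fun_prop) ?_).congr (concatPath_eqOn_right h)
    exact image_two_mul_sub_one_Icc_half_one ▸ mapsTo_image _ _

end Concat

section Variation

variable {E : Type*} [PseudoEMetricSpace E]

lemma eVariationOn_Icc_add_Icc (f : ℝ → E) {a b c : ℝ} (hab : a ≤ b) (hbc : b ≤ c) :
    eVariationOn f (Icc a b) + eVariationOn f (Icc b c) = eVariationOn f (Icc a c) := by
  simpa using eVariationOn.Icc_add_Icc f (s := univ) hab hbc (mem_univ b)

lemma eVariationOn_comp_lineMap (f : ℝ → E) {a b : ℝ} (hab : a ≤ b) :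
    eVariationOn (f ∘ AffineMap.lineMap (k := ℝ) a b) (Icc 0 1) = eVariationOn f (Icc a b) := by
  rw [eVariationOn.comp_eq_of_monotoneOn f _ ((AffineMap.lineMap_mono hab).monotoneOn _),
    ← segment_eq_image_lineMap, segment_eq_Icc hab]

lemma eVariationOn_concatPath {g₁ g₂ : ℝ → E} (h : g₁ 1 = g₂ 0) :
    eVariationOn (concatPath g₁ g₂) (Icc 0 1) =
      eVariationOn g₁ (Icc 0 1) + eVariationOn g₂ (Icc 0 1) := by
  have hmono : Monotone (2 * · : ℝ → ℝ) := fun _ _ hxy => by dsimp only; linarith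
  have hmono' : Monotone (2 * · + -1 : ℝ → ℝ) := fun _ _ hxy => by dsimp only; linarith
  rw [← eVariationOn_Icc_add_Icc _ (by norm_num : (0:ℝ) ≤ 1/2) (by norm_num),
    eVariationOn.eq_of_eqOn (concatPath_eqOn_left g₁ g₂),
    eVariationOn.eq_of_eqOn (concatPath_eqOn_right h),
    eVariationOn.comp_eq_of_monotoneOn _ _ (hmono.monotoneOn _),
    eVariationOn.comp_eq_of_monotoneOn _ _ (hmono'.monotoneOn _),
    image_two_mul_Icc_zero_half, image_two_mul_sub_one_Icc_half_one]

end Variation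

section IntrinsicDistance

variable {S : Set (WithLp 1 (ℝ × ℝ))} {p q r : WithLp 1 (ℝ × ℝ)}
  {g g₁ g₂ : ℝ → WithLp 1 (ℝ × ℝ)}

lemma dS_le_eVariationOn (hg : IsPathIn S p q g) : dS S p q ≤ eVariationOn g (Icc 0 1) :=
  iInf₂_le g hg

lemma IsPathIn.concatPath (h₁ : IsPathIn S p q g₁) (h₂ : IsPathIn S q r g₂) :
    IsPathIn S p r (concatPath g₁ g₂) := by
  obtain ⟨hc₁, h₁0, h₁1, hS₁⟩ := h₁
  obtain ⟨hc₂, h₂0, h₂1, hS₂⟩ := h₂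
  have hjoin : g₁ 1 = g₂ 0 := h₁1.trans h₂0.symm
  refine ⟨hc₁.concatPath hc₂ hjoin, by norm_num [_root_.concatPath, h₁0],
    by norm_num [_root_.concatPath, h₂1], fun y hy => ?_⟩
  rcases le_total y (1/2) with hy' | hy'
  · rw [concatPath_eqOn_left g₁ g₂ ⟨hy.1, hy'⟩]
    exact hS₁ _ (image_two_mul_Icc_zero_half ▸ mem_image_of_mem _ ⟨hy.1, hy'⟩)
  · rw [concatPath_eqOn_right hjoin ⟨hy', hy.2⟩]
    exact hS₂ _ (image_two_mul_sub_one_Icc_half_one ▸ mem_image_of_mem _ ⟨hy', hy.2⟩)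

lemma IsPathIn.comp_lineMap (hg : IsPathIn S p q g) {a b : ℝ} (ha : 0 ≤ a) (hab : a ≤ b)
    (hb : b ≤ 1) : IsPathIn S (g a) (g b) (g ∘ AffineMap.lineMap (k := ℝ) a b) := by
  have hmaps : MapsTo (AffineMap.lineMap a b) (Icc (0:ℝ) 1) (Icc 0 1) := by
    rw [mapsTo_iff_image_subset, ← segment_eq_image_lineMap, segment_eq_Icc hab]
    exact Icc_subset_Icc ha hb
  exact ⟨hg.1.comp AffineMap.lineMap_continuous.continuousOn hmaps, by simp, by simp,
    fun y hy => hg.2.2.2 _ (hmaps hy)⟩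

lemma dS_le_eVariationOn_Icc (hg : IsPathIn S p q g) {a b : ℝ} (ha : 0 ≤ a) (hab : a ≤ b)
    (hb : b ≤ 1) : dS S (g a) (g b) ≤ eVariationOn g (Icc a b) :=
  eVariationOn_comp_lineMap g hab ▸ dS_le_eVariationOn (hg.comp_lineMap ha hab hb)

lemma dS_triangle : dS S p r ≤ dS S p q + dS S q r := by
  simp only [dS, ENNReal.iInf_add, ENNReal.add_iInf]
  exact le_iInf₂ fun g₂ h₂ => le_iInf₂ fun g₁ h₁ =>
    (dS_le_eVariationOn (h₁.concatPath h₂)).trans_eq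
      (eVariationOn_concatPath (h₁.2.2.1.trans h₂.2.1.symm))

end IntrinsicDistance

theorem dS_eq_iInf_through_separator_general (S : Set (WithLp 1 (ℝ × ℝ)))
    (B : Set (WithLp 1 (ℝ × ℝ))) (s t : WithLp 1 (ℝ × ℝ))
    (hsep : ∀ g : ℝ → WithLp 1 (ℝ × ℝ), IsPathIn S s t g → ∃ c ∈ Icc (0:ℝ) 1, g c ∈ B) :
    dS S s t = ⨅ x ∈ B, (dS S s x + dS S x t) := by
  refine le_antisymm (le_iInf₂ fun _ _ => dS_triangle) (le_iInf₂ fun g hg => ?_)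
  obtain ⟨c, hc, hcB⟩ := hsep g hg
  have hs : dS S s (g c) ≤ eVariationOn g (Icc 0 c) :=
    hg.2.1 ▸ dS_le_eVariationOn_Icc hg le_rfl hc.1 hc.2
  have ht : dS S (g c) t ≤ eVariationOn g (Icc c 1) :=
    hg.2.2.1 ▸ dS_le_eVariationOn_Icc hg hc.1 hc.2 le_rfl
  calc ⨅ x ∈ B, (dS S s x + dS S x t) ≤ dS S s (g c) + dS S (g c) t := iInf₂_le _ hcB
    _ ≤ eVariationOn g (Icc 0 c) + eVariationOn g (Icc c 1) := add_le_add hs ht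
    _ = eVariationOn g (Icc 0 1) := eVariationOn_Icc_add_Icc g hc.1 hc.2

theorem dS_eq_iInf_through_separator (S : Set (WithLp 1 (ℝ × ℝ)))
    (B : Set (WithLp 1 (ℝ × ℝ))) (hB : B ⊆ S) (s t : WithLp 1 (ℝ × ℝ))
    (hs : s ∈ S) (ht : t ∈ S)
    (hsep : ∀ g : ℝ → WithLp 1 (ℝ × ℝ), IsPathIn S s t g → ∃ c ∈ Icc (0:ℝ) 1, g c ∈ B) :
    dS S s t = ⨅ x ∈ B, (dS S s x + dS S x t) :=
  dS_eq_iInf_through_separator_general S B s t hsep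
end
end

section
/- Let S be a subset of R^2, let E be a convex subset of S, let s, t be points of S, and let s_e, t_e be points of E. Assume: (i) every path in S from s to t meets E; (ii) for every x in E, d_S(s,x) = d_S(s,s_e) + ||s_e - x||_1 and d_S(t,x) = d_S(t,t_e) + ||t_e - x||_1 (L1 norms coerced into extended nonnegative reals). Then d_S(s,t) = d_S(s,s_e) + ||s_e - t_e||_1 + d_S(t_e,t). -/
open Set

noncomputable section

/-!
The bound `≤` is the triangle inequality through `se` and `te`, the straight segment
`[se, te] ⊆ E ⊆ S` being a path of `L1` length `‖se - te‖₁`. For `≥`, a path from `s` to `t`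
meets `E` at some `x` and splits there, so its length is at least
`d(s,x) + d(x,t) = d(s,se) + ‖se - x‖₁ + ‖te - x‖₁ + d(te,t)`, and the triangle inequality
for `‖·‖₁` finishes.
-/

namespace IntrinsicL1

local notation "V" => WithLp 1 (ℝ × ℝ)

variable {S : Set V}

lemma dS_le_eVariationOn_of_isPathIn {p q : V} {g : ℝ → V} (hg : IsPathIn S p q g) :
    dS S p q ≤ eVariationOn g (Icc 0 1) :=
  iInf₂_le g hg

lemma dS_le_eVariationOn_Icc {g : ℝ → V} {a b : ℝ} (hab : a ≤ b)
    (hg : ContinuousOn g (Icc a b)) (hgS : MapsTo g (Icc a b) S) :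
    dS S (g a) (g b) ≤ eVariationOn g (Icc a b) := by
  set φ : ℝ → ℝ := fun x => a + (b - a) * x
  have hφ : MonotoneOn φ (Icc 0 1) := fun x _ y _ hxy => by
    have := mul_le_mul_of_nonneg_left hxy (sub_nonneg.2 hab); simp only [φ]; linarith
  have hφmaps : MapsTo φ (Icc 0 1) (Icc a b) := fun x hx => by
    have h1 := mul_nonneg (sub_nonneg.2 hab) hx.1
    have h2 := mul_le_mul_of_nonneg_left hx.2 (sub_nonneg.2 hab)
    constructor <;> simp only [φ] <;> linarith
  have hpath : IsPathIn S (g a) (g b) (g ∘ φ) :=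
    ⟨hg.comp (by fun_prop) hφmaps, by simp [φ], by simp [φ], fun x hx => hgS (hφmaps hx)⟩
  exact (dS_le_eVariationOn_of_isPathIn hpath).trans
    (eVariationOn.comp_le_of_monotoneOn g φ hφ hφmaps)

lemma dS_add_dS_le_eVariationOn {p q : V} {g : ℝ → V} (hg : IsPathIn S p q g)
    {c : ℝ} (hc : c ∈ Icc (0 : ℝ) 1) :
    dS S p (g c) + dS S (g c) q ≤ eVariationOn g (Icc 0 1) := by
  obtain ⟨hcont, rfl, rfl, hgS⟩ := hg
  have hleft : Icc 0 c ⊆ Icc (0 : ℝ) 1 := Icc_subset_Icc le_rfl hc.2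
  have hright : Icc c 1 ⊆ Icc (0 : ℝ) 1 := Icc_subset_Icc hc.1 le_rfl
  calc dS S (g 0) (g c) + dS S (g c) (g 1)
      ≤ eVariationOn g (Icc 0 c) + eVariationOn g (Icc c 1) :=
        add_le_add (dS_le_eVariationOn_Icc hc.1 (hcont.mono hleft) fun x hx => hgS x (hleft hx))
          (dS_le_eVariationOn_Icc hc.2 (hcont.mono hright) fun x hx => hgS x (hright hx))
    _ = eVariationOn g (Icc 0 1) := by
        simpa only [univ_inter] using
          eVariationOn.Icc_add_Icc g (s := univ) hc.1 hc.2 (mem_univ c)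

lemma dS_le_eVariationOn_add {p q r : V} {g₁ g₂ : ℝ → V}
    (hg₁ : IsPathIn S p q g₁) (hg₂ : IsPathIn S q r g₂) :
    dS S p r ≤ eVariationOn g₁ (Icc 0 1) + eVariationOn g₂ (Icc 0 1) := by
  obtain ⟨hc₁, rfl, rfl, hS₁⟩ := hg₁
  obtain ⟨hc₂, hq, rfl, hS₂⟩ := hg₂
  set h : ℝ → V := fun x => if x ≤ 1 then g₁ x else g₂ (x - 1)
  have hshift : MapsTo (· - 1) (Icc (1 : ℝ) 2) (Icc 0 1) := fun x hx =>
    ⟨by linarith [hx.1], by linarith [hx.2]⟩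
  have heq₁ : EqOn h g₁ (Icc 0 1) := fun x hx => if_pos hx.2
  have heq₂ : EqOn h (g₂ ∘ (· - 1)) (Icc 1 2) := fun x hx => by
    rcases hx.1.eq_or_lt with rfl | hlt
    · simp [h, hq]
    · exact if_neg hlt.not_ge
  have hunion : Icc (0 : ℝ) 1 ∪ Icc 1 2 = Icc 0 2 := Icc_union_Icc_eq_Icc zero_le_one one_le_two
  have hcont : ContinuousOn h (Icc 0 2) := hunion ▸
    ((hc₁.congr heq₁).union_of_isClosed ((hc₂.comp (by fun_prop) hshift).congr heq₂)
      isClosed_Icc isClosed_Icc)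
  have hmaps : MapsTo h (Icc 0 2) S := hunion ▸ fun x hx => hx.elim
    (fun hx => heq₁ hx ▸ hS₁ x hx) (fun hx => heq₂ hx ▸ hS₂ _ (hshift hx))
  have hvar₂ : eVariationOn h (Icc 1 2) = eVariationOn g₂ (Icc 0 1) := by
    rw [eVariationOn.eq_of_eqOn heq₂, eVariationOn.comp_eq_of_monotoneOn g₂ _
      (fun x _ y _ hxy => sub_le_sub_right hxy 1), image_sub_const_Icc]
    norm_num
  calc dS S (g₁ 0) (g₂ 1) = dS S (h 0) (h 2) := by norm_num [h]
    _ ≤ eVariationOn h (Icc 0 2) := dS_le_eVariationOn_Icc zero_le_two hcont hmaps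
    _ = eVariationOn h (Icc 0 1) + eVariationOn h (Icc 1 2) := by
        simpa only [univ_inter] using
          (eVariationOn.Icc_add_Icc h (s := univ) zero_le_one one_le_two (mem_univ 1)).symm
    _ = eVariationOn g₁ (Icc 0 1) + eVariationOn g₂ (Icc 0 1) := by
        rw [eVariationOn.eq_of_eqOn heq₁, hvar₂]

lemma dS_triangle (p q r : V) : dS S p r ≤ dS S p q + dS S q r := by
  simp only [dS, ENNReal.iInf_add, ENNReal.add_iInf]
  exact le_iInf₂ fun g₂ hg₂ => le_iInf₂ fun g₁ hg₁ => dS_le_eVariationOn_add hg₁ hg₂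

lemma dS_comm (p q : V) : dS S p q = dS S q p := by
  suffices ∀ p q : V, dS S q p ≤ dS S p q from le_antisymm (this q p) (this p q)
  refine fun p q => le_iInf₂ fun g hg => ?_
  obtain ⟨hcont, rfl, rfl, hgS⟩ := hg
  have hrev : MapsTo (1 - ·) (Icc (0 : ℝ) 1) (Icc 0 1) := fun x hx =>
    ⟨by linarith [hx.2], by linarith [hx.1]⟩
  have hpath : IsPathIn S (g 1) (g 0) (g ∘ (1 - ·)) :=
    ⟨hcont.comp (by fun_prop) hrev, by simp, by simp, fun x hx => hgS _ (hrev hx)⟩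
  exact (dS_le_eVariationOn_of_isPathIn hpath).trans
    (eVariationOn.comp_le_of_antitoneOn g _ (fun _ _ _ _ hxy => sub_le_sub_left hxy 1) hrev)

lemma dS_le_nnnorm_sub {p q : V} (hpq : segment ℝ p q ⊆ S) :
    dS S p q ≤ ‖p - q‖₊ := by
  have hpath : IsPathIn S p q (AffineMap.lineMap p q) :=
    ⟨(AffineMap.lineMap_continuous).continuousOn, AffineMap.lineMap_apply_zero p q,
      AffineMap.lineMap_apply_one p q,
      fun x hx => hpq (segment_eq_image_lineMap ℝ p q ▸ mem_image_of_mem _ hx)⟩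
  have hid : eVariationOn (id : ℝ → ℝ) (Icc 0 1) = 1 := by simp
  calc dS S p q ≤ eVariationOn (AffineMap.lineMap p q ∘ id) (Icc (0 : ℝ) 1) :=
        dS_le_eVariationOn_of_isPathIn hpath
    _ ≤ nndist p q * eVariationOn id (Icc (0 : ℝ) 1) :=
        (lipschitzWith_lineMap p q).lipschitzOnWith.comp_eVariationOn_le (mapsTo_univ _ _)
    _ = ‖p - q‖₊ := by rw [hid, mul_one, nndist_eq_nnnorm]

lemma iInf_dS_add_dS_le_dS {E : Set V} {s t : V}
    (hsep : ∀ g : ℝ → V, IsPathIn S s t g → ∃ c ∈ Icc (0 : ℝ) 1, g c ∈ E) :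
    ⨅ x ∈ E, dS S s x + dS S x t ≤ dS S s t :=
  le_iInf₂ fun g hg =>
    let ⟨c, hc, hcE⟩ := hsep g hg
    (iInf₂_le (g c) hcE).trans (dS_add_dS_le_eVariationOn hg hc)

end IntrinsicL1

open IntrinsicL1

theorem dS_separated_by_segment_general (S : Set (WithLp 1 (ℝ × ℝ)))
    (E : Set (WithLp 1 (ℝ × ℝ))) (hES : E ⊆ S) (hEconv : Convex ℝ E)
    (s t : WithLp 1 (ℝ × ℝ))
    (se te : WithLp 1 (ℝ × ℝ)) (hse : se ∈ E) (hte : te ∈ E)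
    (hsep : ∀ g : ℝ → WithLp 1 (ℝ × ℝ), IsPathIn S s t g → ∃ c ∈ Icc (0:ℝ) 1, g c ∈ E)
    (hprojs : ∀ x ∈ E, dS S s x = dS S s se + (‖se - x‖₊ : ENNReal))
    (hprojt : ∀ x ∈ E, dS S t x = dS S t te + (‖te - x‖₊ : ENNReal)) :
    dS S s t = dS S s se + (‖se - te‖₊ : ENNReal) + dS S te t := by
  refine le_antisymm ?_ (le_trans ?_ (iInf_dS_add_dS_le_dS hsep))
  · calc dS S s t ≤ dS S s se + (dS S se te + dS S te t) :=
          (dS_triangle s se t).trans (by gcongr; exact dS_triangle se te t)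
      _ ≤ dS S s se + (‖se - te‖₊ + dS S te t) := by
          gcongr; exact dS_le_nnnorm_sub ((hEconv.segment_subset hse hte).trans hES)
      _ = _ := (add_assoc _ _ _).symm
  · refine le_iInf₂ fun x hx => ?_
    have hnorm : (‖se - te‖₊ : ENNReal) ≤ ‖se - x‖₊ + ‖te - x‖₊ := by
      rw [← sub_sub_sub_cancel_right se te x]; exact_mod_cast nnnorm_sub_le _ _
    calc dS S s se + ‖se - te‖₊ + dS S te t
        ≤ dS S s se + (‖se - x‖₊ + ‖te - x‖₊) + dS S te t := by gcongr
      _ = (dS S s se + ‖se - x‖₊) + (dS S t te + ‖te - x‖₊) := by rw [dS_comm te t]; ring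
      _ = dS S s x + dS S x t := by rw [← hprojs x hx, ← hprojt x hx, dS_comm x t]

theorem dS_separated_by_segment (S : Set (WithLp 1 (ℝ × ℝ)))
    (E : Set (WithLp 1 (ℝ × ℝ))) (hES : E ⊆ S) (hEconv : Convex ℝ E)
    (s t : WithLp 1 (ℝ × ℝ)) (hs : s ∈ S) (ht : t ∈ S)
    (se te : WithLp 1 (ℝ × ℝ)) (hse : se ∈ E) (hte : te ∈ E)
    (hsep : ∀ g : ℝ → WithLp 1 (ℝ × ℝ), IsPathIn S s t g → ∃ c ∈ Icc (0:ℝ) 1, g c ∈ E)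
    (hprojs : ∀ x ∈ E, dS S s x = dS S s se + (‖se - x‖₊ : ENNReal))
    (hprojt : ∀ x ∈ E, dS S t x = dS S t te + (‖te - x‖₊ : ENNReal)) :
    dS S s t = dS S s se + (‖se - te‖₊ : ENNReal) + dS S te t :=
  dS_separated_by_segment_general S E hES hEconv s t se te hse hte hsep hprojs hprojt
end
end
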